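/- arXiv:math/0606420 — 2 statements merged into one kernel-verified Lean document; each statement's English description precedes it below -/
import Mathlib

section
/- Let (X, h_i, p_i) be a contracting-on-average iterated function system on a Polish space X with base point x₀ (h_i Lipschitz, p_i Dini and bounded away from 0), and let ν be its unique invariant probability measure. Then ∫_X log⁺(d(x,x₀)) dν(x) < ∞. -/
/-!
Since the weights are bounded below and the maps are Lipschitz, the condition
`∑ⱼ pⱼ(x) log (d(hⱼx, hⱼy) / d(x, y)) < -b` survives clipping the logarithms from below at a
fixed level; expanding `r ^ s = exp (s log r)` to second order then shows that for a small
exponent `s > 0` the system contracts `d ^ s` on average: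
`∑ⱼ pⱼ(x) d(hⱼx, hⱼy) ^ s ≤ ρ d(x, y) ^ s` with `ρ < 1`.
Hence `V = d(·, x₀) ^ s` satisfies the drift inequality `PV ≤ ρV + C` for the Markov kernel
`P x = ∑ⱼ pⱼ(x) δ_{hⱼx}`, which leaves `ν` invariant. Iterating the drift on the truncations
`min V N` and letting first the number of steps and then `N` tend to infinity gives
`∫ V dν ≤ C / (1 - ρ)`, and `log⁺ t ≤ t ^ s / s`.
-/

open MeasureTheory Metric Filter ENNReal NNReal

noncomputable section

open Finset Real Topology ProbabilityTheory

section WeightedSums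

variable {ι : Type*} [Fintype ι]

theorem sum_mul_max_le_of_sum_mul_le {p ℓ : ι → ℝ} {δ b T : ℝ} (hδ : 0 < δ) (hTb : 0 ≤ T + b)
    (hT : 0 ≤ T) (hp : ∀ j, δ ≤ p j) (hp1 : ∑ j, p j ≤ 1) (hℓ : ∀ j, ℓ j ≤ T)
    (hsum : ∑ j, p j * ℓ j ≤ -b) :
    ∑ j, p j * max (ℓ j) (-((T + b) / δ)) ≤ -b := by
  classical
  set A := (T + b) / δ
  have hA : 0 ≤ A := div_nonneg hTb hδ.le
  have hp0 : ∀ j, 0 ≤ p j := fun j => hδ.le.trans (hp j)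
  by_cases hclip : ∀ j, -A ≤ ℓ j
  · simpa only [max_eq_left (hclip _)] using hsum
  push Not at hclip
  obtain ⟨j₀, hj₀⟩ := hclip
  -- one clipped term already contributes `δ * (-A) = -(T + b)`, the others at most `T`
  have hbound : ∀ j, max (ℓ j) (-A) ≤ T + if j = j₀ then -A - T else 0 := by
    intro j
    split_ifs with hj
    · subst hj; rw [max_eq_right hj₀.le]; linarith
    · exact (max_le (hℓ j) (by linarith)).trans (by simp)
  calc ∑ j, p j * max (ℓ j) (-A)
      ≤ ∑ j, p j * (T + if j = j₀ then -A - T else 0) :=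
        sum_le_sum fun j _ => mul_le_mul_of_nonneg_left (hbound j) (hp0 j)
    _ = (∑ j, p j) * T + p j₀ * (-A - T) := by
        simp [mul_add, Finset.sum_add_distrib, Finset.sum_mul]
    _ ≤ 1 * T + δ * (-A - T) :=
        add_le_add (mul_le_mul_of_nonneg_right hp1 hT)
          (mul_le_mul_of_nonpos_right (hp j₀) (by linarith))
    _ ≤ -b := by
        have : δ * A = T + b := mul_div_cancel₀ _ hδ.ne'
        nlinarith

theorem sum_mul_exp_mul_le {p u : ι → ℝ} {b M s : ℝ} (hp0 : ∀ j, 0 ≤ p j) (hp1 : ∑ j, p j = 1)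
    (hu : ∀ j, |u j| ≤ M) (hsum : ∑ j, p j * u j ≤ -b) (hs : 0 ≤ s) (hsM : s * M ≤ 1)
    (hsM2 : s * M ^ 2 ≤ b / 2) :
    ∑ j, p j * exp (s * u j) ≤ 1 - s * b / 2 := by
  have hterm : ∀ j, exp (s * u j) ≤ 1 + s * u j + s * (s * M ^ 2) := by
    intro j
    have hsu : |s * u j| ≤ s * M := by
      rw [abs_mul, abs_of_nonneg hs]; exact mul_le_mul_of_nonneg_left (hu j) hs
    have hsq : (s * u j) ^ 2 ≤ s * (s * M ^ 2) := by
      rw [← sq_abs]; nlinarith [abs_nonneg (s * u j)]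
    linarith [(abs_le.mp (abs_exp_sub_one_sub_id_le (hsu.trans hsM))).2]
  calc ∑ j, p j * exp (s * u j)
      ≤ ∑ j, p j * (1 + s * u j + s * (s * M ^ 2)) :=
        sum_le_sum fun j _ => mul_le_mul_of_nonneg_left (hterm j) (hp0 j)
    _ = (∑ j, p j) * (1 + s * (s * M ^ 2)) + s * ∑ j, p j * u j := by
        simp only [Finset.sum_mul, Finset.mul_sum, ← Finset.sum_add_distrib]
        exact sum_congr rfl fun j _ => by ring
    _ ≤ 1 - s * b / 2 := by
        rw [hp1]; nlinarith [mul_le_mul_of_nonneg_left hsum hs]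

theorem rpow_le_exp_mul_max_log {r s : ℝ} (hr : 0 ≤ r) (hs : 0 < s) (a : ℝ) :
    r ^ s ≤ exp (s * max (log r) a) := by
  rcases hr.eq_or_lt with rfl | hr
  · rw [Real.zero_rpow hs.ne']; exact (exp_pos _).le
  · rw [rpow_def_of_pos hr, mul_comm]
    exact exp_le_exp.mpr (mul_le_mul_of_nonneg_left (le_max_left _ _) hs.le)

theorem exists_sum_mul_rpow_le {δ b R : ℝ} (hδ : 0 < δ) (hb : 0 < b) (hR : 1 ≤ R) :
    ∃ s ∈ Set.Ioc (0 : ℝ) 1, ∀ p r : ι → ℝ, (∀ j, δ ≤ p j) → ∑ j, p j = 1 →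
      (∀ j, 0 ≤ r j) → (∀ j, r j ≤ R) → ∑ j, p j * log (r j) ≤ -b →
      ∑ j, p j * r j ^ s ≤ 1 - s * b / 2 := by
  set T := log R
  have hT : 0 ≤ T := log_nonneg hR
  set A := (T + b) / δ
  have hA : 0 < A := by positivity
  set M := A + T
  have hM : 0 < M := by positivity
  set s := min 1 (min (1 / M) (b / (2 * M ^ 2)))
  have hs : 0 < s := by positivity
  have hsM : s * M ≤ 1 := by
    have : s ≤ 1 / M := (min_le_right _ _).trans (min_le_left _ _)
    rwa [le_div_iff₀ hM] at this
  have hsM2 : s * M ^ 2 ≤ b / 2 := by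
    have : s ≤ b / (2 * M ^ 2) := (min_le_right _ _).trans (min_le_right _ _)
    rw [le_div_iff₀ (by positivity)] at this
    linarith
  refine ⟨s, ⟨hs, min_le_left _ _⟩, fun p r hp hp1 hr0 hrR hsum => ?_⟩
  have hlog : ∀ j, log (r j) ≤ T := by
    intro j
    rcases (hr0 j).eq_or_lt with hr | hr
    · rw [← hr, Real.log_zero]; exact hT
    · exact log_le_log hr (hrR j)
  have hclip : ∑ j, p j * max (log (r j)) (-A) ≤ -b :=
    sum_mul_max_le_of_sum_mul_le hδ (by linarith) hT hp hp1.le hlog hsum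
  have hu : ∀ j, |max (log (r j)) (-A)| ≤ M := fun j =>
    abs_le.mpr ⟨by linarith [le_max_right (log (r j)) (-A)],
      max_le (by linarith [hlog j]) (by linarith)⟩
  calc ∑ j, p j * r j ^ s ≤ ∑ j, p j * exp (s * max (log (r j)) (-A)) :=
        sum_le_sum fun j _ => mul_le_mul_of_nonneg_left
          (rpow_le_exp_mul_max_log (hr0 j) hs _) (hδ.le.trans (hp j))
    _ ≤ 1 - s * b / 2 :=
        sum_mul_exp_mul_le (fun j => hδ.le.trans (hp j)) hp1 hu hclip hs.le hsM hsM2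

end WeightedSums

theorem continuous_of_dist_le_modulus {α β : Type*} [PseudoMetricSpace α] [PseudoMetricSpace β]
    {f : α → β} {w : ℝ → ℝ} (hw : Monotone w) (hf : ∀ x y, dist (f x) (f y) ≤ w (dist x y))
    {t : ℕ → ℝ} (ht : ∀ n, 0 < t n) (hwt : Tendsto (fun n => w (t n)) atTop (𝓝 0)) :
    Continuous f := by
  refine Metric.continuous_iff.mpr fun x ε hε => ?_
  obtain ⟨n, hn⟩ := (hwt.eventually (gt_mem_nhds hε)).exists
  exact ⟨t n, ht n, fun y hy => (hf y x).trans_lt ((hw hy.le).trans_lt hn)⟩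

theorem lintegral_ofReal_max_log_lt_top {α : Type*} [MeasurableSpace α] {μ : Measure α}
    {f : α → ℝ} (hf : ∀ x, 0 ≤ f x) {s : ℝ} (hs : 0 < s)
    (hfs : ∫⁻ x, ENNReal.ofReal (f x ^ s) ∂μ < ∞) :
    ∫⁻ x, ENNReal.ofReal (max (log (f x)) 0) ∂μ < ∞ :=
  calc ∫⁻ x, ENNReal.ofReal (max (log (f x)) 0) ∂μ
      ≤ ∫⁻ x, ENNReal.ofReal s⁻¹ * ENNReal.ofReal (f x ^ s) ∂μ := lintegral_mono fun x => by
        rw [← ENNReal.ofReal_mul (inv_nonneg.mpr hs.le), ← div_eq_inv_mul]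
        exact ENNReal.ofReal_le_ofReal
          (max_le (log_le_rpow_div (hf x) hs) (div_nonneg (rpow_nonneg (hf x) s) hs.le))
    _ = ENNReal.ofReal s⁻¹ * ∫⁻ x, ENNReal.ofReal (f x ^ s) ∂μ :=
        lintegral_const_mul' _ _ ENNReal.ofReal_ne_top
    _ < ∞ := ENNReal.mul_lt_top ENNReal.ofReal_lt_top hfs

namespace ProbabilityTheory.Kernel

variable {α : Type*} [MeasurableSpace α]

section WeightedMaps

variable {β ι : Type*} [MeasurableSpace β] [Fintype ι]
  {h : ι → α → β} {q : ι → α → ℝ≥0∞} {hh : ∀ i, Measurable (h i)} {hq : ∀ i, Measurable (q i)}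

def weightedMaps (h : ι → α → β) (q : ι → α → ℝ≥0∞) (hh : ∀ i, Measurable (h i))
    (hq : ∀ i, Measurable (q i)) : Kernel α β where
  toFun x := ∑ i, q i x • Measure.dirac (h i x)
  measurable' := Measure.measurable_of_measurable_coe _ fun s hs => by
    simp only [Measure.coe_finsetSum, Finset.sum_apply, Measure.smul_apply, smul_eq_mul]
    exact Finset.measurable_sum _ fun i _ =>
      (hq i).mul ((Measure.measurable_coe hs).comp (Measure.measurable_dirac.comp (hh i)))

theorem weightedMaps_apply (x : α) :
    weightedMaps h q hh hq x = ∑ i, q i x • Measure.dirac (h i x) := rfl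

theorem lintegral_weightedMaps {f : β → ℝ≥0∞} (hf : Measurable f) (x : α) :
    ∫⁻ y, f y ∂weightedMaps h q hh hq x = ∑ i, q i x * f (h i x) := by
  simp [weightedMaps_apply, lintegral_dirac' _ hf]

theorem isMarkovKernel_weightedMaps (hq1 : ∀ x, ∑ i, q i x = 1) :
    IsMarkovKernel (weightedMaps h q hh hq) :=
  ⟨fun x => ⟨by simp [weightedMaps_apply, hq1]⟩⟩

theorem invariant_weightedMaps {ν : Measure α} {h : ι → α → α} {hh : ∀ i, Measurable (h i)}
    (hν : ν = ∑ i, (ν.withDensity (q i)).map (h i)) : (weightedMaps h q hh hq).Invariant ν := by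
  refine Measure.ext_of_lintegral _ fun f hf => ?_
  rw [Measure.lintegral_bind (Kernel.measurable _).aemeasurable hf.aemeasurable]
  simp only [lintegral_weightedMaps hf]
  conv_rhs => rw [hν]
  rw [lintegral_finsetSum_measure, lintegral_finsetSum' (f := fun i x => q i x * f (h i x)) _
    fun i _ => ((hq i).mul (hf.comp (hh i))).aemeasurable]
  refine sum_congr rfl fun i _ => ?_
  rw [MeasureTheory.lintegral_map hf (hh i)]
  exact (lintegral_withDensity_eq_lintegral_mul _ (hq i) (hf.comp (hh i))).symm

end WeightedMaps

variable {κ : Kernel α α} {ν : Measure α}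

namespace Invariant

theorem lintegral_le (hκ : κ.Invariant ν) {f g : α → ℝ≥0∞} (hf : Measurable f)
    (hfg : ∀ x, ∫⁻ y, f y ∂κ x ≤ g x) : ∫⁻ x, f x ∂ν ≤ ∫⁻ x, g x ∂ν :=
  calc ∫⁻ x, f x ∂ν = ∫⁻ x, f x ∂ν.bind κ := by rw [hκ.def]
    _ = ∫⁻ x, ∫⁻ y, f y ∂κ x ∂ν :=
        Measure.lintegral_bind κ.measurable.aemeasurable hf.aemeasurable
    _ ≤ ∫⁻ x, g x ∂ν := lintegral_mono hfg

end Invariant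

theorem lintegral_min_mul_add_le [IsMarkovKernel κ] {V : α → ℝ≥0∞} (hV : Measurable V)
    {ρ C : ℝ≥0∞} (hdrift : ∀ x, ∫⁻ y, V y ∂κ x ≤ ρ * V x + C) (a c N : ℝ≥0∞) (x : α) :
    ∫⁻ y, min (a * V y + c) N ∂κ x ≤ min (a * ρ * V x + (a * C + c)) N := by
  refine le_min ((lintegral_mono fun y => min_le_left _ _).trans ?_)
    ((lintegral_mono fun y => min_le_right _ _).trans (by simp))
  calc ∫⁻ y, a * V y + c ∂κ x = a * ∫⁻ y, V y ∂κ x + c := by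
        rw [lintegral_add_right _ measurable_const, lintegral_const_mul _ hV,
          MeasureTheory.lintegral_const, measure_univ, mul_one]
    _ ≤ a * (ρ * V x + C) + c := by gcongr; exact hdrift x
    _ = a * ρ * V x + (a * C + c) := by ring

theorem Invariant.lintegral_le_of_drift [IsMarkovKernel κ] [IsFiniteMeasure ν]
    (hκ : κ.Invariant ν) {V : α → ℝ≥0∞} (hV : Measurable V) (hV_ne_top : ∀ x, V x ≠ ∞)
    {ρ C : ℝ≥0∞} (hρ : ρ < 1) (hdrift : ∀ x, ∫⁻ y, V y ∂κ x ≤ ρ * V x + C) :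
    ∫⁻ x, V x ∂ν ≤ (1 - ρ)⁻¹ * C * ν Set.univ := by
  set K := (1 - ρ)⁻¹ * C
  set c : ℕ → ℝ≥0∞ := fun n => ∑ i ∈ range n, ρ ^ i * C
  have hcK : ∀ n, c n ≤ K := fun n =>
    calc c n ≤ ∑' i, ρ ^ i * C := ENNReal.sum_le_tsum _
      _ = K := by rw [ENNReal.tsum_mul_right, ENNReal.tsum_geometric]
  have hiter : ∀ (N : ℝ≥0∞) n, ∫⁻ x, min (V x) N ∂ν ≤ ∫⁻ x, min (ρ ^ n * V x + c n) N ∂ν := by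
    intro N n
    induction n with
    | zero => simp [c]
    | succ n ih =>
      refine ih.trans (hκ.lintegral_le (((measurable_const.mul hV).add_const _).min
        measurable_const) fun x => (lintegral_min_mul_add_le hV hdrift _ _ _ x).trans_eq ?_)
      simp [c, sum_range_succ, pow_succ, add_comm]
  have hvanish : ∀ N : ℕ, Tendsto (fun n => ∫⁻ x, min (ρ ^ n * V x) N ∂ν) atTop (𝓝 0) := by
    intro N
    have hpt : ∀ x, Tendsto (fun n => min (ρ ^ n * V x) N) atTop (𝓝 0) := fun x => by
      simpa using (ENNReal.Tendsto.mul_const (ENNReal.tendsto_pow_atTop_nhds_zero_of_lt_one hρ)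
        (Or.inr (hV_ne_top x))).min (tendsto_const_nhds (x := (N : ℝ≥0∞)))
    simpa using tendsto_lintegral_of_dominated_convergence (fun _ => (N : ℝ≥0∞))
      (fun n => (measurable_const.mul hV).min measurable_const)
      (fun n => ae_of_all _ fun x => min_le_right _ _) (by simp [ENNReal.mul_eq_top])
      (ae_of_all _ hpt)
  have htrunc : ∀ N : ℕ, ∫⁻ x, min (V x) N ∂ν ≤ K * ν Set.univ := by
    intro N
    refine ge_of_tendsto' (by simpa using (hvanish N).add_const (K * ν Set.univ)) fun n => ?_
    calc ∫⁻ x, min (V x) N ∂ν ≤ ∫⁻ x, min (ρ ^ n * V x + c n) N ∂ν := hiter N n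
      _ ≤ ∫⁻ x, (min (ρ ^ n * V x) N + K) ∂ν := lintegral_mono fun x => by
          rw [← min_add_add_right]
          exact min_le_min (add_le_add_right (hcK n) _) le_self_add
      _ = ∫⁻ x, min (ρ ^ n * V x) N ∂ν + K * ν Set.univ := by
          rw [lintegral_add_right _ measurable_const, MeasureTheory.lintegral_const]
  calc ∫⁻ x, V x ∂ν = ∫⁻ x, ⨆ N : ℕ, min (V x) N ∂ν := by
        simp_rw [← inf_iSup_eq, iSup_natCast, inf_top_eq]
    _ = ⨆ N : ℕ, ∫⁻ x, min (V x) N ∂ν :=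
        lintegral_iSup (fun N => hV.min measurable_const)
          fun m n hmn x => min_le_min le_rfl (Nat.cast_le.mpr hmn)
    _ ≤ K * ν Set.univ := iSup_le htrunc

end ProbabilityTheory.Kernel

section IteratedFunctionSystem

variable {X ι : Type*} [Fintype ι] {h : ι → X → X} {p : ι → X → ℝ}

theorem exists_sum_mul_dist_rpow_le [MetricSpace X] {L : ℝ≥0} {δ b : ℝ} (hδ : 0 < δ)
    (hb : 0 < b) (hlip : ∀ i, LipschitzWith L (h i)) (hp : ∀ i x, δ ≤ p i x)
    (hpsum : ∀ x, ∑ i, p i x = 1)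
    (hcoa : ∀ x y, x ≠ y → ∑ j, p j x * log (dist (h j x) (h j y) / dist x y) ≤ -b) :
    ∃ s ∈ Set.Ioc (0 : ℝ) 1, ∃ ρ < 1, ∀ x y,
      ∑ j, p j x * dist (h j x) (h j y) ^ s ≤ ρ * dist x y ^ s := by
  obtain ⟨s, hs, hratio⟩ := exists_sum_mul_rpow_le (ι := ι) hδ hb (R := L + 1) (by simp)
  refine ⟨s, hs, 1 - s * b / 2, by nlinarith [hs.1], fun x y => ?_⟩
  rcases eq_or_ne x y with rfl | hxy
  · simp [Real.zero_rpow hs.1.ne']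
  have hd : 0 < dist x y := dist_pos.mpr hxy
  set r := fun j => dist (h j x) (h j y) / dist x y
  have hr : ∀ j, dist (h j x) (h j y) ^ s = r j ^ s * dist x y ^ s := fun j => by
    rw [← Real.mul_rpow (by positivity) hd.le, div_mul_cancel₀ _ hd.ne']
  have hrL : ∀ j, r j ≤ L + 1 := fun j => by
    rw [div_le_iff₀ hd]
    nlinarith [(hlip j).dist_le_mul x y]
  calc ∑ j, p j x * dist (h j x) (h j y) ^ s = (∑ j, p j x * r j ^ s) * dist x y ^ s := by
        simp only [hr, Finset.sum_mul, mul_assoc]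
    _ ≤ (1 - s * b / 2) * dist x y ^ s :=
        mul_le_mul_of_nonneg_right (hratio (p · x) r (hp · x) (hpsum x)
          (fun j => by positivity) hrL (hcoa x y hxy)) (by positivity)

theorem sum_mul_dist_rpow_le_add [PseudoMetricSpace X] {s ρ : ℝ} (hs0 : 0 ≤ s) (hs1 : s ≤ 1)
    (hp0 : ∀ i x, 0 ≤ p i x) (hpsum : ∀ x, ∑ i, p i x = 1)
    (hcontr : ∀ x y, ∑ j, p j x * dist (h j x) (h j y) ^ s ≤ ρ * dist x y ^ s) (x₀ x : X) :
    ∑ j, p j x * dist (h j x) x₀ ^ s ≤ ρ * dist x x₀ ^ s + ∑ j, dist (h j x₀) x₀ ^ s := by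
  have hterm : ∀ j, p j x * dist (h j x) x₀ ^ s ≤
      p j x * dist (h j x) (h j x₀) ^ s + dist (h j x₀) x₀ ^ s := by
    intro j
    have hp1 : p j x ≤ 1 := hpsum x ▸ single_le_sum (fun i _ => hp0 i x) (mem_univ j)
    have htri : dist (h j x) x₀ ^ s ≤ dist (h j x) (h j x₀) ^ s + dist (h j x₀) x₀ ^ s :=
      (rpow_le_rpow dist_nonneg (dist_triangle _ _ _) hs0).trans
        (rpow_add_le_add_rpow dist_nonneg dist_nonneg hs0 hs1)
    calc p j x * dist (h j x) x₀ ^ s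
        ≤ p j x * (dist (h j x) (h j x₀) ^ s + dist (h j x₀) x₀ ^ s) :=
          mul_le_mul_of_nonneg_left htri (hp0 j x)
      _ ≤ p j x * dist (h j x) (h j x₀) ^ s + dist (h j x₀) x₀ ^ s := by
          rw [mul_add]; gcongr; exact mul_le_of_le_one_left (by positivity) hp1
  calc ∑ j, p j x * dist (h j x) x₀ ^ s
      ≤ ∑ j, p j x * dist (h j x) (h j x₀) ^ s + ∑ j, dist (h j x₀) x₀ ^ s := by
        rw [← sum_add_distrib]; exact sum_le_sum fun j _ => hterm j
    _ ≤ ρ * dist x x₀ ^ s + ∑ j, dist (h j x₀) x₀ ^ s := by gcongr; exact hcontr x x₀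

theorem lintegral_dist_rpow_lt_top [PseudoMetricSpace X] [MeasurableSpace X] [BorelSpace X]
    {ν : Measure X} [IsFiniteMeasure ν] (hh : ∀ i, Measurable (h i)) (hpm : ∀ i, Measurable (p i))
    (hp0 : ∀ i x, 0 ≤ p i x) (hpsum : ∀ x, ∑ i, p i x = 1)
    (hinv : ν = ∑ i, Measure.map (h i) (ν.withDensity fun x => ENNReal.ofReal (p i x)))
    {s ρ : ℝ} (hs0 : 0 ≤ s) (hs1 : s ≤ 1) (hρ : ρ < 1)
    (hcontr : ∀ x y, ∑ j, p j x * dist (h j x) (h j y) ^ s ≤ ρ * dist x y ^ s) (x₀ : X) :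
    ∫⁻ x, ENNReal.ofReal (dist x x₀ ^ s) ∂ν < ∞ := by
  have hq : ∀ i, Measurable fun x => ENNReal.ofReal (p i x) := fun i =>
    ENNReal.measurable_ofReal.comp (hpm i)
  set κ := Kernel.weightedMaps h _ hh hq
  have : IsMarkovKernel κ := Kernel.isMarkovKernel_weightedMaps fun x => by
    rw [← ENNReal.ofReal_sum_of_nonneg fun i _ => hp0 i x, hpsum x, ENNReal.ofReal_one]
  have hV : Measurable fun x => ENNReal.ofReal (dist x x₀ ^ s) := by fun_prop
  have hdrift : ∀ x, ∫⁻ y, ENNReal.ofReal (dist y x₀ ^ s) ∂κ x ≤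
      ENNReal.ofReal ρ * ENNReal.ofReal (dist x x₀ ^ s) +
        ENNReal.ofReal (∑ j, dist (h j x₀) x₀ ^ s) := fun x => by
    rw [Kernel.lintegral_weightedMaps hV, ← ENNReal.ofReal_mul' (by positivity)]
    calc ∑ i, ENNReal.ofReal (p i x) * ENNReal.ofReal (dist (h i x) x₀ ^ s)
        = ENNReal.ofReal (∑ i, p i x * dist (h i x) x₀ ^ s) := by
          rw [ENNReal.ofReal_sum_of_nonneg fun i _ => mul_nonneg (hp0 i x) (by positivity)]
          simp only [ENNReal.ofReal_mul (hp0 _ x)]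
      _ ≤ ENNReal.ofReal (ρ * dist x x₀ ^ s + ∑ j, dist (h j x₀) x₀ ^ s) :=
          ENNReal.ofReal_le_ofReal (sum_mul_dist_rpow_le_add hs0 hs1 hp0 hpsum hcontr x₀ x)
      _ ≤ _ := ENNReal.ofReal_add_le
  have hρ' : ENNReal.ofReal ρ < 1 := ENNReal.ofReal_lt_one.mpr hρ
  refine ((Kernel.invariant_weightedMaps hinv).lintegral_le_of_drift hV
    (fun _ => ENNReal.ofReal_ne_top) hρ' hdrift).trans_lt ?_
  exact ENNReal.mul_lt_top (ENNReal.mul_lt_top (ENNReal.inv_lt_top.mpr (tsub_pos_of_lt hρ'))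
    ENNReal.ofReal_lt_top) (measure_lt_top ν _)

end IteratedFunctionSystem

theorem logplus_integrable_invariant_general
    (X : Type*) [MetricSpace X]
    [MeasurableSpace X] [BorelSpace X] (x₀ : X)
    (k : ℕ) (h : Fin k → X → X) (p : Fin k → X → ℝ)
    (hlip : ∀ i, ∃ L : ℝ≥0, LipschitzWith L (h i))
    (hpbelow : ∃ δ > (0 : ℝ), ∀ i x, δ ≤ p i x)
    (hpsum : ∀ x, ∑ i, p i x = 1)
    (hdini : ∀ i, ∃ w : ℝ → ℝ, Monotone w ∧
      (∀ x y : X, |p i x - p i y| ≤ w (dist x y)) ∧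
      Summable fun n : ℕ => w ((1 / 2 : ℝ) ^ (n + 1)))
    (hcoa : ∃ b > (0 : ℝ), ∀ x y, x ≠ y →
      ∑ j, p j x * Real.log (dist (h j x) (h j y) / dist x y) < -b)
    (ν : Measure X) [IsProbabilityMeasure ν]
    (hinv : ν = ∑ i, Measure.map (h i)
      (ν.withDensity fun x => ENNReal.ofReal (p i x))) :
    ∫⁻ x, ENNReal.ofReal (max (Real.log (dist x x₀)) 0) ∂ν < ⊤ := by
  obtain ⟨δ, hδ, hpδ⟩ := hpbelow
  obtain ⟨b, hb, hcoa⟩ := hcoa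
  choose L hL using hlip
  have hlipL : ∀ i, LipschitzWith (∑ j, L j) (h i) := fun i =>
    (hL i).weaken (single_le_sum (fun j _ => zero_le) (mem_univ i))
  obtain ⟨s, ⟨hs0, hs1⟩, ρ, hρ, hcontr⟩ :=
    exists_sum_mul_dist_rpow_le hδ hb hlipL hpδ hpsum fun x y hxy => (hcoa x y hxy).le
  have hpm : ∀ i, Measurable (p i) := fun i => by
    obtain ⟨w, hw, hwp, hwsum⟩ := hdini i
    exact (continuous_of_dist_le_modulus hw (by simpa only [Real.dist_eq] using hwp)
      (fun n => by positivity) hwsum.tendsto_atTop_zero).measurable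
  exact lintegral_ofReal_max_log_lt_top (fun x => dist_nonneg) hs0 <|
    lintegral_dist_rpow_lt_top (fun i => (hlipL i).continuous.measurable) hpm
      (fun i x => hδ.le.trans (hpδ i x)) hpsum hinv hs0.le hs1 hρ hcontr x₀

/-- The invariant measure of a contracting-on-average IFS integrates `log⁺` of the
distance to a base point. -/
theorem logplus_integrable_invariant
    (X : Type*) [MetricSpace X] [CompleteSpace X] [TopologicalSpace.SeparableSpace X]
    [MeasurableSpace X] [BorelSpace X] (x₀ : X)
    (k : ℕ) (hk : 2 ≤ k) (h : Fin k → X → X) (p : Fin k → X → ℝ)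
    (hlip : ∀ i, ∃ L : ℝ≥0, LipschitzWith L (h i))
    (hprange : ∀ i x, p i x ∈ Set.Ioo (0 : ℝ) 1)
    (hpbelow : ∃ δ > (0 : ℝ), ∀ i x, δ ≤ p i x)
    (hpsum : ∀ x, ∑ i, p i x = 1)
    (hdini : ∀ i, ∃ w : ℝ → ℝ, Monotone w ∧
      (∀ x y : X, |p i x - p i y| ≤ w (dist x y)) ∧
      Summable fun n : ℕ => w ((1 / 2 : ℝ) ^ (n + 1)))
    (hcoa : ∃ b > (0 : ℝ), ∀ x y, x ≠ y →
      ∑ j, p j x * Real.log (dist (h j x) (h j y) / dist x y) < -b)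
    (ν : Measure X) [IsProbabilityMeasure ν]
    (hinv : ν = ∑ i, Measure.map (h i)
      (ν.withDensity fun x => ENNReal.ofReal (p i x))) :
    ∫⁻ x, ENNReal.ofReal (max (Real.log (dist x x₀)) 0) ∂ν < ⊤ :=
  logplus_integrable_invariant_general X x₀ k h p hlip hpbelow hpsum hdini hcoa ν hinv
end
end

section
/- Let (h_i, p_i) be a contracting-on-average iterated function system on ℝ^d as above, with each h_i a C^{1+α} diffeomorphism, invariant measure ν and Lyapunov exponent λ < 0, satisfying the strong open set condition with open set U and separation constant R₁. Fix ε > 0, K > 0, n, ω ∈ Σ and x ∈ U, and assume the distortion hypotheses: for all m ≤ n, K^{-1}·exp(m(1+ε)λ) ≤ ‖D h_{(σ^{n−m}ω)^m}(h_{ω^{n−m}}(x))‖ ≤ K·exp(m(1−ε)λ); let l(K,R₁) be the constant from the second bounded distortion lemma. Then for every word τ^n of length n with τ^n ≠ ω^n, every y ∈ U, and every r ≤ l(K,R₁)·exp(n(1+2ε)λ): h_{τ^n}(y) ∉ B_r(h_{ω^n}(x)). -/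
open MeasureTheory Metric Filter ENNReal NNReal

noncomputable section

variable {k : ℕ}

/-- `hIter h ω n = h_{ω^n} = h_{ω (n-1)} ∘ ⋯ ∘ h_{ω 0}`. -/
def hIter {X : Type*} (h : Fin k → X → X) (ω : ℕ → Fin k) : ℕ → X → X
  | 0 => id
  | n + 1 => fun x => h (ω n) (hIter h ω n x)

lemma hIter_add {X : Type*} (h : Fin k → X → X) (ω : ℕ → Fin k) (m s : ℕ) (x : X) :
    hIter h ω (m + s) x = hIter h (fun t => ω (t + s)) m (hIter h ω s x) := by
  induction m with
  | zero => simp [hIter, Nat.zero_add]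
  | succ m ih =>
    have : m + 1 + s = (m + s) + 1 := by omega
    rw [this]
    show h (ω (m + s)) (hIter h ω (m + s) x) = _
    rw [ih]
    rfl

lemma hIter_congr {X : Type*} (h : Fin k → X → X) (ω τ : ℕ → Fin k) (m : ℕ)
    (hag : ∀ t < m, ω t = τ t) (x : X) : hIter h ω m x = hIter h τ m x := by
  induction m with
  | zero => rfl
  | succ m ih =>
    show h (ω m) (hIter h ω m x) = h (τ m) (hIter h τ m x)
    rw [hag m (Nat.lt_succ_self m), ih (fun t ht => hag t (Nat.lt_succ_of_lt ht))]

lemma hIter_mem_of_mem {X : Type*} (h : Fin k → X → X) (U : Set X)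
    (hUinv : ∀ i, h i '' U ⊆ U) (ω : ℕ → Fin k) (m : ℕ) {x : X} (hx : x ∈ U) :
    hIter h ω m x ∈ U := by
  induction m with
  | zero => exact hx
  | succ m ih => exact hUinv (ω m) ⟨hIter h ω m x, ih, rfl⟩

lemma hIter_leftInv {X : Type*} [TopologicalSpace X] (h : Fin k → X → X)
    (hg : ∀ i, ∃ g : X → X, Continuous g ∧ Function.LeftInverse g (h i))
    (ω : ℕ → Fin k) (m : ℕ) :
    ∃ g : X → X, Continuous g ∧ Function.LeftInverse g (hIter h ω m) := by
  induction m with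
  | zero => exact ⟨id, continuous_id, fun x => rfl⟩
  | succ m ih =>
    obtain ⟨G, hGc, hGl⟩ := ih
    obtain ⟨g, hgc, hgl⟩ := hg (ω m)
    exact ⟨G ∘ g, hGc.comp hgc, fun x => by
      show G (g (h (ω m) (hIter h ω m x))) = x
      rw [hgl, hGl]⟩

lemma hIter_continuous {X : Type*} [TopologicalSpace X] (h : Fin k → X → X)
    (hc : ∀ i, Continuous (h i)) (ω : ℕ → Fin k) (m : ℕ) :
    Continuous (hIter h ω m) := by
  induction m with
  | zero => exact continuous_id
  | succ m ih => exact (hc (ω m)).comp ih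

/-- Under the strong open set condition, images of `U` under words different from `ω^n`
stay away from a small ball around `h_{ω^n}(x)`. -/
theorem SOSC_separation
    (d : ℕ) (hd : 1 ≤ d) (hk : 2 ≤ k) (α : ℝ≥0) (hα0 : 0 < α) (hα1 : α ≤ 1)
    (h : Fin k → EuclideanSpace ℝ (Fin d) → EuclideanSpace ℝ (Fin d))
    (p : Fin k → EuclideanSpace ℝ (Fin d) → ℝ)
    (hsmooth : ∀ i, ContDiff ℝ 1 (h i))
    -- the maps are C¹ diffeomorphisms
    (hdiffeo : ∀ i, ∃ g : EuclideanSpace ℝ (Fin d) → EuclideanSpace ℝ (Fin d),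
      ContDiff ℝ 1 g ∧ Function.LeftInverse g (h i) ∧ Function.RightInverse g (h i))
    (hholder : ∀ i, ∃ C : ℝ≥0, HolderWith C α fun x => Real.log ‖fderiv ℝ (h i) x‖)
    (hlogbdd : ∃ M : ℝ, ∀ i x, |Real.log ‖fderiv ℝ (h i) x‖| ≤ M)
    (hpholder : ∀ i, ∃ C : ℝ≥0, HolderWith C α (p i))
    (hprange : ∀ i x, p i x ∈ Set.Ioo (0 : ℝ) 1)
    (hpbelow : ∃ δ > (0 : ℝ), ∀ i x, δ ≤ p i x)
    (hpsum : ∀ x, ∑ i, p i x = 1)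
    (hcoa : ∃ b > (0 : ℝ), ∀ x y, x ≠ y →
      ∑ j, p j x * Real.log (dist (h j x) (h j y) / dist x y) < -b)
    (ν : Measure (EuclideanSpace ℝ (Fin d))) [IsProbabilityMeasure ν]
    (hinv : ν = ∑ i, Measure.map (h i)
      (ν.withDensity fun x => ENNReal.ofReal (p i x)))
    -- the Lyapunov exponent
    (lam : ℝ)
    (hlam : lam = ∫ x, ∑ j, p j x * Real.log ‖fderiv ℝ (h j) x‖ ∂ν)
    (hlamneg : lam < 0)
    -- strong open set condition with open set U and separation constant R₁
    (U : Set (EuclideanSpace ℝ (Fin d))) (hUne : U.Nonempty) (hUopen : IsOpen U)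
    (hUinv : ∀ i, h i '' U ⊆ U)
    (R₁ : ℝ) (hR₁ : 0 < R₁)
    (hsep : ∀ i j, i ≠ j → ∀ a ∈ h i '' U, ∀ b ∈ h j '' U, R₁ ≤ dist a b)
    -- fixed ε, K and the constant l = l(K,R₁) of the second bounded distortion lemma
    (ε K l : ℝ) (hε : 0 < ε) (hK : 0 < K) (hl : 0 < l)
    (hlprop : ∀ (x' : EuclideanSpace ℝ (Fin d)) (n' : ℕ) (ω' : ℕ → Fin k),
      (∀ m ≤ n',
        K⁻¹ * Real.exp ((m : ℝ) * (1 + ε) * lam)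
            ≤ ‖fderiv ℝ (hIter h (fun i => ω' (i + (n' - m))) m)
                (hIter h ω' (n' - m) x')‖ ∧
        ‖fderiv ℝ (hIter h (fun i => ω' (i + (n' - m))) m) (hIter h ω' (n' - m) x')‖
            ≤ K * Real.exp ((m : ℝ) * (1 - ε) * lam)) →
      ∀ r : ℝ, r ≤ l * Real.exp ((n' : ℝ) * (1 + 2 * ε) * lam) →
        ∑ m ∈ Finset.range (n' + 1),
          Metric.diam ((hIter h (fun i => ω' (i + (n' - m))) m) ⁻¹'
            Metric.ball (hIter h ω' n' x') r) ≤ R₁)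
    -- fixed n, ω and x ∈ U satisfying the distortion hypotheses
    (n : ℕ) (ω : ℕ → Fin k) (x : EuclideanSpace ℝ (Fin d)) (hxU : x ∈ U)
    (hdist : ∀ m ≤ n,
      K⁻¹ * Real.exp ((m : ℝ) * (1 + ε) * lam)
          ≤ ‖fderiv ℝ (hIter h (fun i => ω (i + (n - m))) m)
              (hIter h ω (n - m) x)‖ ∧
      ‖fderiv ℝ (hIter h (fun i => ω (i + (n - m))) m) (hIter h ω (n - m) x)‖
          ≤ K * Real.exp ((m : ℝ) * (1 - ε) * lam)) :
    ∀ τ : ℕ → Fin k, (∃ i < n, τ i ≠ ω i) → ∀ y ∈ U,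
      ∀ r : ℝ, r ≤ l * Real.exp ((n : ℝ) * (1 + 2 * ε) * lam) →
        hIter h τ n y ∉ Metric.ball (hIter h ω n x) r := by
  intro τ hex y hyU r hr hmem
  -- r must be positive
  have hr0 : 0 < r := lt_of_le_of_lt dist_nonneg (mem_ball.mp hmem)
  have hn0 : 0 < n := by
    obtain ⟨i, hi, _⟩ := hex
    omega
  classical
  -- take the greatest index i < n with τ i ≠ ω i
  set P : ℕ → Prop := fun j => τ j ≠ ω j with hP
  obtain ⟨i0, hi0n, hPi0⟩ := hex
  set i := Nat.findGreatest P (n - 1) with hidef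
  have hi0le : i0 ≤ n - 1 := by omega
  have hPi : P i := Nat.findGreatest_spec (P := P) hi0le hPi0
  have hile : i ≤ n - 1 := Nat.findGreatest_le _
  have hin : i < n := by omega
  have hmax : ∀ j, i < j → j < n → τ j = ω j := by
    intro j hij hjn
    by_contra hne
    have hj1 : j ≤ n - 1 := by omega
    have := Nat.le_findGreatest (P := P) hj1 hne
    omega
  -- the tail map
  set m₁ := n - (i + 1) with hm₁
  have hni : n = m₁ + (i + 1) := by omega
  set G := hIter h (fun t => ω (t + (i + 1))) m₁ with hG
  set c := hIter h ω n x with hc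
  set a := hIter h ω (i + 1) x with ha
  set b := hIter h τ (i + 1) y with hb
  have hGa : G a = c := by
    rw [hc, hG, ha]
    conv_rhs => rw [hni]
    exact (hIter_add h ω m₁ (i + 1) x).symm
  have hGb : G b = hIter h τ n y := by
    rw [hG, hb]
    conv_rhs => rw [hni, hIter_add h τ m₁ (i + 1) y]
    refine (hIter_congr h _ _ m₁ ?_ _).symm
    intro t ht
    exact hmax (t + (i + 1)) (by omega) (by omega)
  -- a and b are R₁-separated
  have haU : hIter h ω i x ∈ U := hIter_mem_of_mem h U hUinv ω i hxU
  have hbU : hIter h τ i y ∈ U := hIter_mem_of_mem h U hUinv τ i hyU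
  have haim : a ∈ h (ω i) '' U := ⟨hIter h ω i x, haU, rfl⟩
  have hbim : b ∈ h (τ i) '' U := ⟨hIter h τ i y, hbU, rfl⟩
  have hsepab : R₁ ≤ dist a b := hsep (ω i) (τ i) (fun he => hPi he.symm) a haim b hbim
  -- a and b lie in S := G ⁻¹' ball c r
  set S := G ⁻¹' Metric.ball c r with hS
  have haS : a ∈ S := by
    simp only [hS, Set.mem_preimage, hGa]
    exact mem_ball_self hr0
  have hbS : b ∈ S := by
    simp only [hS, Set.mem_preimage, hGb]
    exact hmem
  -- left inverses exist
  have hginv : ∀ i, ∃ g : EuclideanSpace ℝ (Fin d) → EuclideanSpace ℝ (Fin d),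
      Continuous g ∧ Function.LeftInverse g (h i) := by
    intro i
    obtain ⟨g, hgc, hgl, _⟩ := hdiffeo i
    exact ⟨g, hgc.continuous, hgl⟩
  -- preimages of balls under hIter are bounded
  have hbdd : ∀ (ω' : ℕ → Fin k) (m : ℕ),
      Bornology.IsBounded ((hIter h ω' m) ⁻¹' Metric.ball c r) := by
    intro ω' m
    obtain ⟨g, hgc, hgl⟩ := hIter_leftInv h hginv ω' m
    have hsub : (hIter h ω' m) ⁻¹' Metric.ball c r ⊆ g '' Metric.closedBall c r := by
      intro z hz
      exact ⟨hIter h ω' m z, ball_subset_closedBall hz, hgl z⟩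
    exact ((isCompact_closedBall c r).image hgc).isBounded.subset hsub
  have hSbdd : Bornology.IsBounded S := hbdd _ m₁
  have hdiamS : R₁ ≤ Metric.diam S := le_trans hsepab (Metric.dist_le_diam_of_mem hSbdd haS hbS)
  -- the n-th term is positive
  set S₀ := (hIter h ω n) ⁻¹' Metric.ball c r with hS₀
  have hxS₀ : x ∈ S₀ := by
    simp only [hS₀, Set.mem_preimage, ← hc]
    exact mem_ball_self hr0
  have hS₀open : IsOpen S₀ :=
    isOpen_ball.preimage (hIter_continuous h (fun i => (hsmooth i).continuous) ω n)
  obtain ⟨ρ, hρ0, hρsub⟩ := Metric.isOpen_iff.mp hS₀open x hxS₀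
  have hS₀bdd : Bornology.IsBounded S₀ := hbdd ω n
  set e : EuclideanSpace ℝ (Fin d) := EuclideanSpace.single ⟨0, hd⟩ (1 : ℝ) with he
  have hne : ‖e‖ = 1 := by
    rw [he, EuclideanSpace.norm_single]; norm_num
  set x' : EuclideanSpace ℝ (Fin d) := x + (ρ / 2) • e with hx'
  have hdxx' : dist x x' = ρ / 2 := by
    rw [hx', dist_self_add_right, norm_smul, hne, mul_one, Real.norm_eq_abs,
      abs_of_pos (by linarith : (0:ℝ) < ρ / 2)]
  have hx'S₀ : x' ∈ S₀ := hρsub (by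
    rw [mem_ball, dist_comm, hdxx']; linarith)
  have hdiamS₀ : ρ / 2 ≤ Metric.diam S₀ := by
    rw [← hdxx']
    exact Metric.dist_le_diam_of_mem hS₀bdd hxS₀ hx'S₀
  -- now apply the distortion sum bound
  have hsum := hlprop x n ω hdist r hr
  -- identify the m₁ term with diam S and the n term with diam S₀
  have hterm₁ : Metric.diam ((hIter h (fun t => ω (t + (n - m₁))) m₁) ⁻¹'
      Metric.ball (hIter h ω n x) r) = Metric.diam S := by
    have : n - m₁ = i + 1 := by omega
    rw [this]
  have hterm₂ : Metric.diam ((hIter h (fun t => ω (t + (n - n))) n) ⁻¹'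
      Metric.ball (hIter h ω n x) r) = Metric.diam S₀ := by
    have h1 : n - n = 0 := Nat.sub_self n
    rw [h1]
    have h2 : (fun t => ω (t + 0)) = ω := by funext t; rw [Nat.add_zero]
    rw [h2]
  have hm₁lt : m₁ < n := by omega
  have hpair : Metric.diam S + Metric.diam S₀ ≤
      ∑ m ∈ Finset.range (n + 1),
        Metric.diam ((hIter h (fun t => ω (t + (n - m))) m) ⁻¹'
          Metric.ball (hIter h ω n x) r) := by
    have hsub : ({m₁, n} : Finset ℕ) ⊆ Finset.range (n + 1) := by
      intro z hz
      simp only [Finset.mem_insert, Finset.mem_singleton] at hz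
      rcases hz with h | h <;> simp [Finset.mem_range] <;> omega
    calc Metric.diam S + Metric.diam S₀
        = ∑ m ∈ ({m₁, n} : Finset ℕ),
            Metric.diam ((hIter h (fun t => ω (t + (n - m))) m) ⁻¹'
              Metric.ball (hIter h ω n x) r) := by
          rw [Finset.sum_pair (by omega : m₁ ≠ n), hterm₁, hterm₂]
      _ ≤ _ := Finset.sum_le_sum_of_subset_of_nonneg hsub
            (fun z _ _ => Metric.diam_nonneg)
  linarith
end
end
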